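/- arXiv:0808.2893 — 3 statements merged into one kernel-verified Lean document; each statement's English description precedes it below -/
import Mathlib

section
/- The explicit functions x(t) = C₁ t^(-1+3(α₀+α₁+α₂))/(α₀+α₁+α₂-α₃) + C₁² t^(-4+6(α₀+α₁+α₂))/(4(α₀+α₁+α₂-2α₃)) + C₂ t^(2-3(α₀+α₁+α₂)) and y(t) = C₁ t^(α₀+α₁+α₂-2α₃) satisfy the Hamiltonian system dx/dt = (3y(y+4t) - 4(α₀+α₁+α₂-2α₃)x)/(4t), dy/dt = (α₀+α₁+α₂-2α₃)y/t, for any constants C₁, C₂, assuming α₀+α₁+α₂+α₃ = 1 and the denominators α₀+α₁+α₂-α₃ and α₀+α₁+α₂-2α₃ are nonzero. -/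
/-!
Using `α₃ = 1 - (α₀ + α₁ + α₂)`, the exponents of `x` are `e + 1`, `2e` and `-e` with
`e = α₀ + α₁ + α₂ - 2α₃` the exponent of `y`, and `3 (α₀ + α₁ + α₂ - α₃) = 2e + 1`. Writing the
derivative of `s ^ c` as `c s ^ c / s`, both equations become rational identities in `t` and `t ^ e`;
the one for `x` holds precisely because of the relation `3D = 2e + 1` for the first denominator `D`.
-/

open Complex

lemma hasDerivAt_ofReal_cpow_const_div {t : ℝ} (ht : 0 < t) (c : ℂ) :
    HasDerivAt (fun s : ℝ => (s : ℂ) ^ c) (c * (t : ℂ) ^ c / t) t := by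
  have h :=
    (hasStrictDerivAt_cpow_const (c := c) (ofReal_mem_slitPlane.mpr ht)).hasDerivAt.comp_ofReal
  rwa [cpow_sub _ _ (ofReal_ne_zero.mpr ht.ne'), cpow_one, ← mul_div_assoc] at h

section PowerSolution

variable {t : ℝ} (e D C₁ C₂ : ℂ)

lemma hasDerivAt_power_x (ht : 0 < t) (he : e ≠ 0) (hD : 3 * D = 2 * e + 1) (hD0 : D ≠ 0) :
    HasDerivAt
      (fun s : ℝ => C₁ * (s : ℂ) ^ (e + 1) / D + C₁ ^ 2 * (s : ℂ) ^ (2 * e) / (4 * e)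
        + C₂ * (s : ℂ) ^ (-e))
      ((3 * (C₁ * (t : ℂ) ^ e) * (C₁ * (t : ℂ) ^ e + 4 * t)
        - 4 * e * (C₁ * (t : ℂ) ^ (e + 1) / D + C₁ ^ 2 * (t : ℂ) ^ (2 * e) / (4 * e)
          + C₂ * (t : ℂ) ^ (-e))) / (4 * t)) t := by
  have ht0 : (t : ℂ) ≠ 0 := ofReal_ne_zero.mpr ht.ne'
  have hU : (t : ℂ) ^ e ≠ 0 := by simp [cpow_eq_zero_iff, ht0]
  refine (((((hasDerivAt_ofReal_cpow_const_div ht (e + 1)).const_mul C₁).div_const D).add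
    (((hasDerivAt_ofReal_cpow_const_div ht (2 * e)).const_mul (C₁ ^ 2)).div_const (4 * e))).add
    ((hasDerivAt_ofReal_cpow_const_div ht (-e)).const_mul C₂)).congr_deriv ?_
  rw [cpow_add _ _ ht0, cpow_one, two_mul, cpow_add _ _ ht0, cpow_neg]
  field_simp
  linear_combination (-4 * C₁ * ((t : ℂ) ^ e) ^ 2 * t) * hD

lemma hasDerivAt_power_y (ht : 0 < t) :
    HasDerivAt (fun s : ℝ => C₁ * (s : ℂ) ^ e) (e * (C₁ * (t : ℂ) ^ e) / t) t := by
  refine ((hasDerivAt_ofReal_cpow_const_div ht e).const_mul C₁).congr_deriv ?_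
  ring

end PowerSolution

/-- The explicit functions x(t), y(t) solve the Hamiltonian system for K₁. -/
theorem stmt_0 (α₀ α₁ α₂ α₃ C₁ C₂ : ℂ)
    (hrel : α₀ + α₁ + α₂ + α₃ = 1)
    (h1 : α₀ + α₁ + α₂ - α₃ ≠ 0)
    (h2 : α₀ + α₁ + α₂ - 2 * α₃ ≠ 0)
    (x y : ℝ → ℂ)
    (hx : ∀ t : ℝ, x t =
      C₁ * (t : ℂ) ^ (-1 + 3 * (α₀ + α₁ + α₂)) / (α₀ + α₁ + α₂ - α₃)
      + C₁ ^ 2 * (t : ℂ) ^ (-4 + 6 * (α₀ + α₁ + α₂)) / (4 * (α₀ + α₁ + α₂ - 2 * α₃))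
      + C₂ * (t : ℂ) ^ (2 - 3 * (α₀ + α₁ + α₂)))
    (hy : ∀ t : ℝ, y t = C₁ * (t : ℂ) ^ (α₀ + α₁ + α₂ - 2 * α₃)) :
    ∀ t : ℝ, 0 < t →
      HasDerivAt x
        ((3 * y t * (y t + 4 * (t : ℂ)) - 4 * (α₀ + α₁ + α₂ - 2 * α₃) * x t)
          / (4 * (t : ℂ))) t ∧
      HasDerivAt y ((α₀ + α₁ + α₂ - 2 * α₃) * y t / (t : ℂ)) t := by
  intro t ht
  set e := α₀ + α₁ + α₂ - 2 * α₃
  have hx_power : x = fun s : ℝ => C₁ * (s : ℂ) ^ (e + 1) / (α₀ + α₁ + α₂ - α₃)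
      + C₁ ^ 2 * (s : ℂ) ^ (2 * e) / (4 * e) + C₂ * (s : ℂ) ^ (-e) := by
    funext s
    rw [hx s, show -1 + 3 * (α₀ + α₁ + α₂) = e + 1 by linear_combination 2 * hrel,
      show -4 + 6 * (α₀ + α₁ + α₂) = 2 * e by linear_combination 4 * hrel,
      show 2 - 3 * (α₀ + α₁ + α₂) = -e by linear_combination -2 * hrel]
  rw [funext hy, hx_power]
  exact ⟨hasDerivAt_power_x e _ C₁ C₂ ht h2 (by linear_combination hrel) h1,
    hasDerivAt_power_y e C₁ ht⟩
end

section
/- The change of variables z₁ = t·z, w₁ = w/t is symplectic: if (z(t), w(t)) solves the Hamiltonian system for K₂ = (3/(4t))z²w² + (3/2)z²w + ((3α₁+3α₂-2)/(2t))zw + (3/2)α₁z, then (z₁, w₁) solves the Hamiltonian system (in variables z₁, w₁) for the Hamiltonian K̃₂ = (3 z₁ (z₁w₁² + 2z₁w₁ + 2(α₁+α₂)w₁ + 2α₁))/(4t). -/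
/-!
The change `(z, w) ↦ (t z, w / t)` is the canonical transformation with generating function
`F = t z w₁`, so any Hamiltonian `K` becomes `K̃(t, z₁, w₁) = K(t, z₁ / t, t w₁) + z₁ w₁ / t`,
the last term being `∂F/∂t`. For `K = K₂` this is exactly `K̃₂`: the correction cancels the
`-z w / t` part of the `z w` term of `K₂`.
-/

section Rescaling

variable {𝕜 : Type*} [NontriviallyNormedField 𝕜]

lemma hasDerivAt_comp_const_mul {f : 𝕜 → 𝕜} {f' c x : 𝕜} (hc : c ≠ 0) (hf : HasDerivAt f f' x) :
    HasDerivAt (fun v => f (c * v)) (f' * c) (x / c) := by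
  have hf' : HasDerivAt f f' (c * (x / c)) := by rwa [mul_div_cancel₀ x hc]
  exact hf'.comp (x / c) (hasDerivAt_const_mul c)

lemma hasDerivAt_comp_div_const {f : 𝕜 → 𝕜} {f' c x : 𝕜} (hc : c ≠ 0) (hf : HasDerivAt f f' x) :
    HasDerivAt (fun v => f (v / c)) (f' / c) (c * x) := by
  have hf' : HasDerivAt f f' (c * x / c) := by rwa [mul_div_cancel_left₀ x hc]
  exact (hf'.comp (c * x) ((hasDerivAt_id' (c * x)).div_const c)).congr_deriv (mul_one_div f' c)

variable {K K' : 𝕜 → 𝕜 → 𝕜} {c z w : 𝕜}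

lemma deriv_rescaled_hamiltonian_snd (hc : c ≠ 0)
    (hK' : ∀ z₁ w₁, K' z₁ w₁ = K (z₁ / c) (c * w₁) + z₁ * w₁ / c)
    (hKw : DifferentiableAt 𝕜 (K z) w) :
    deriv (K' (c * z)) (w / c) = c * deriv (K z) w + z := by
  have hK'_eq : K' (c * z) = fun v => K z (c * v) + z * v := by
    funext v
    rw [hK', mul_div_cancel_left₀ z hc, mul_assoc, mul_div_cancel_left₀ _ hc]
  have h : HasDerivAt (fun v => K z (c * v) + z * v) (deriv (K z) w * c + z) (w / c) :=
    (hasDerivAt_comp_const_mul hc hKw.hasDerivAt).fun_add (hasDerivAt_const_mul z)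
  rw [hK'_eq, h.deriv]
  ring

lemma deriv_rescaled_hamiltonian_fst (hc : c ≠ 0)
    (hK' : ∀ z₁ w₁, K' z₁ w₁ = K (z₁ / c) (c * w₁) + z₁ * w₁ / c)
    (hKz : DifferentiableAt 𝕜 (fun zv => K zv w) z) :
    deriv (fun zv => K' zv (w / c)) (c * z) = deriv (fun zv => K zv w) z / c + w / c ^ 2 := by
  have hK'_eq : (fun zv => K' zv (w / c)) = fun v => K (v / c) w + v * (w / c ^ 2) := by
    funext v
    rw [hK', mul_div_cancel₀ w hc]
    field_simp
  have h : HasDerivAt (fun v => K (v / c) w + v * (w / c ^ 2))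
      (deriv (fun zv => K zv w) z / c + w / c ^ 2) (c * z) :=
    (hasDerivAt_comp_div_const hc hKz.hasDerivAt).fun_add (hasDerivAt_mul_const _)
  rw [hK'_eq, h.deriv]

end Rescaling

theorem hamiltonian_flow_rescale {K K' : ℂ → ℂ → ℂ → ℂ} {z w : ℝ → ℂ} {t : ℝ} (ht : (t : ℂ) ≠ 0)
    (hK' : ∀ z₁ w₁, K' t z₁ w₁ = K t (z₁ / t) (t * w₁) + z₁ * w₁ / t)
    (hKz : DifferentiableAt ℂ (fun zv => K t zv (w t)) (z t))
    (hKw : DifferentiableAt ℂ (K t (z t)) (w t))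
    (hz : HasDerivAt z (deriv (fun wv => K t (z t) wv) (w t)) t)
    (hw : HasDerivAt w (-deriv (fun zv => K t zv (w t)) (z t)) t) :
    HasDerivAt (fun s : ℝ => (s : ℂ) * z s) (deriv (fun wv => K' t (t * z t) wv) (w t / t)) t ∧
      HasDerivAt (fun s : ℝ => w s / s) (-deriv (fun zv => K' t zv (w t / t)) (t * z t)) t := by
  have hcoe : HasDerivAt (fun s : ℝ => (s : ℂ)) 1 t := (hasDerivAt_id t).ofReal_comp
  rw [deriv_rescaled_hamiltonian_snd ht hK' hKw, deriv_rescaled_hamiltonian_fst ht hK' hKz]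
  constructor
  · refine (hcoe.mul hz).congr_deriv ?_
    ring
  · refine (hw.div hcoe ht).congr_deriv ?_
    field_simp
    ring

lemma Kt₂_eq_rescaled_K₂ {α₁ α₂ : ℂ} {K₂ Kt₂ : ℂ → ℂ → ℂ → ℂ}
    (hK₂ : ∀ t z w : ℂ, K₂ t z w =
      (3 / (4 * t)) * z ^ 2 * w ^ 2 + (3 / 2) * z ^ 2 * w
      + ((3 * α₁ + 3 * α₂ - 2) / (2 * t)) * z * w + (3 / 2) * α₁ * z)
    (hKt₂ : ∀ t z₁ w₁ : ℂ, Kt₂ t z₁ w₁ =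
      3 * z₁ * (z₁ * w₁ ^ 2 + 2 * z₁ * w₁ + 2 * (α₁ + α₂) * w₁ + 2 * α₁) / (4 * t))
    {t : ℂ} (ht : t ≠ 0) (z₁ w₁ : ℂ) :
    Kt₂ t z₁ w₁ = K₂ t (z₁ / t) (t * w₁) + z₁ * w₁ / t := by
  rw [hK₂, hKt₂]
  field_simp
  ring

/-- The symplectic change z₁ = t z, w₁ = w/t sends solutions of the
Hamiltonian system for K₂ to solutions of the Hamiltonian system for K̃₂. -/
theorem stmt_2 (α₁ α₂ : ℂ)
    (K₂ Kt₂ : ℂ → ℂ → ℂ → ℂ)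
    (hK₂ : ∀ t z w : ℂ, K₂ t z w =
      (3 / (4 * t)) * z ^ 2 * w ^ 2 + (3 / 2) * z ^ 2 * w
      + ((3 * α₁ + 3 * α₂ - 2) / (2 * t)) * z * w + (3 / 2) * α₁ * z)
    (hKt₂ : ∀ t z₁ w₁ : ℂ, Kt₂ t z₁ w₁ =
      3 * z₁ * (z₁ * w₁ ^ 2 + 2 * z₁ * w₁ + 2 * (α₁ + α₂) * w₁ + 2 * α₁) / (4 * t))
    (z w : ℝ → ℂ)
    (hsol : ∀ t : ℝ, 0 < t →
      HasDerivAt z (deriv (fun wv => K₂ (t : ℂ) (z t) wv) (w t)) t ∧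
      HasDerivAt w (-deriv (fun zv => K₂ (t : ℂ) zv (w t)) (z t)) t) :
    ∀ t : ℝ, 0 < t →
      HasDerivAt (fun s : ℝ => (s : ℂ) * z s)
        (deriv (fun wv => Kt₂ (t : ℂ) ((t : ℂ) * z t) wv) (w t / (t : ℂ))) t ∧
      HasDerivAt (fun s : ℝ => w s / (s : ℂ))
        (-deriv (fun zv => Kt₂ (t : ℂ) zv (w t / (t : ℂ))) ((t : ℂ) * z t)) t := by
  intro t ht
  obtain ⟨hz, hw⟩ := hsol t ht
  have ht0 : (t : ℂ) ≠ 0 := Complex.ofReal_ne_zero.mpr ht.ne'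
  have hK₂_fun : K₂ t = fun z w => (3 / (4 * (t : ℂ))) * z ^ 2 * w ^ 2 + (3 / 2) * z ^ 2 * w
      + ((3 * α₁ + 3 * α₂ - 2) / (2 * t)) * z * w + (3 / 2) * α₁ * z := by
    funext z w
    exact hK₂ t z w
  refine hamiltonian_flow_rescale ht0 (Kt₂_eq_rescaled_K₂ hK₂ hKt₂ ht0) ?_ ?_ hz hw
  · rw [hK₂_fun]
    fun_prop
  · rw [hK₂_fun]
    fun_prop
end

section
/- If α₃ = 0 and α₀+α₁+α₂+α₃ = 1, then -∂H/∂q vanishes identically on the locus p = 0, so {p = 0} is an invariant set of the system (1). -/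
/-- The polynomial Hamiltonian H of the system (1). -/
noncomputable def Ham (α₁ α₂ α₃ t x y z w q p : ℂ) : ℂ :=
  y ^ 3 / (4 * t) + (3 / 2) * y ^ 2 + ((3 * α₃ - 1) / t) * x * y
  + (3 / (4 * t)) * z ^ 2 * w ^ 2 + (3 / 2) * z ^ 2 * w
  + ((3 * α₁ + 3 * α₂ - 2) / (2 * t)) * z * w + (3 / 2) * α₁ * z
  - (4 / t) * p ^ 3 - 6 * p ^ 2 - ((3 * α₁ + 3 * α₂ + 3 * α₃ - 2) / t) * q * p - 6 * t * p
  + (3 / (4 * t)) * α₁ * (8 * x * p + 2 * z * p + y * z) + (6 / t) * α₂ * x * p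
  + (3 / (2 * t)) * α₃ * (4 * x * p - y * q)
  + (3 / (4 * t)) * (8 * x * y * q * p - 4 * z * w * q * p + 8 * x * z * w * p
      - 8 * x ^ 2 * y * p + 2 * z ^ 2 * w * p + y * z ^ 2 * w - 2 * y * q ^ 2 * p
      + 8 * w ^ 2 * p - 4 * y * p ^ 2 + 4 * y * w ^ 2 + 4 * y ^ 2 * w + 8 * y * w * p
      - 8 * x * p + 8 * t * y * w)

/-- if α₃ = 0 then -∂H/∂q vanishes identically on the locus p = 0,
so {p = 0} is invariant for the system (1). -/
theorem stmt_16 (α₀ α₁ α₂ α₃ t : ℂ) (ht : t ≠ 0)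
    (hα₃ : α₃ = 0) (hrel : α₀ + α₁ + α₂ + α₃ = 1) :
    ∀ x y z w q : ℂ,
      -deriv (fun qv => Ham α₁ α₂ α₃ t x y z w qv 0) q = 0 := by
  intro x y z w q
  have h : (fun qv => Ham α₁ α₂ α₃ t x y z w qv 0)
      = fun _ => Ham α₁ α₂ α₃ t x y z w 0 0 := by
    funext qv
    simp only [Ham, hα₃]
    ring
  rw [h, deriv_const]
  simp
end
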